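/- arXiv:1911.08087 — 2 statements merged into one kernel-verified Lean document; each statement's English description precedes it below -/
import Mathlib

section
/- Let K be a number field of degree d over Q, let n ≥ d, and let α ∈ K^n. Then D(α) ≤ ((d!)²/|Δ_K|) · binom(n,d) · H_K(α)². -/
open scoped NumberField
open IsDedekindDomain

/-- The normalized absolute value of `a ∈ K` at a finite place `v` of the number field `K`,
namely `|a|_v = N(v)^{-v(a)}`, so that the product formula holds. -/
noncomputable def finAbs {K : Type*} [Field K] [NumberField K]
    (v : HeightOneSpectrum (𝓞 K)) (a : K) : ℝ :=
  (WithZeroMulInt.toNNReal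
    (by
      simp only [ne_eq, Nat.cast_eq_zero]
      exact fun h => v.ne_bot (Ideal.absNorm_eq_zero_iff.mp h) :
        (Ideal.absNorm v.asIdeal : NNReal) ≠ 0)
    (v.valuation K a) : ℝ)

/-- The inhomogeneous Weil height `H_K` of a tuple of elements of `K`, relative to `K`:
`H_K(γ) = ∏_v max{1, |γ_1|_v, …, |γ_m|_v}` over all places of `K`, where at an infinite
place `w` the normalized absolute value is `w(·)^mult w`. -/
noncomputable def heightK {K : Type*} [Field K] [NumberField K] {m : ℕ} (γ : Fin m → K) : ℝ :=
  (∏ w : NumberField.InfinitePlace K, max 1 (⨆ i, w (γ i)) ^ w.mult) *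
  ∏ᶠ v : HeightOneSpectrum (𝓞 K), max 1 (⨆ i, finAbs v (γ i))

/-- `disc(γ_I)`: the discriminant of the sub-`d`-tuple of `γ` indexed by the subset `I`
of cardinality `d`, i.e. the square of the determinant of the matrix `(σ_i(γ_{i_j}))`,
where `σ_1, …, σ_d` are the embeddings `K → ℂ`. -/
noncomputable def subDisc {K : Type*} [Field K] {d m : ℕ} (σ : Fin d → (K →+* ℂ))
    (γ : Fin m → K) (I : Finset (Fin m)) (hI : I.card = d) : ℂ :=
  (Matrix.of fun i j => σ i (γ ((I.orderIsoOfFin hI j : Fin m)))).det ^ 2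

/-- `D(α) = (1/|Δ_K|) ∑_{I ⊆ [n], |I| = d} |disc(α_I)|`. -/
noncomputable def Dht {K : Type*} [Field K] [NumberField K] {d n : ℕ}
    (σ : Fin d → (K →+* ℂ)) (α : Fin n → K) : ℝ :=
  (1 / |(NumberField.discr K : ℝ)|) *
    ∑ I ∈ (Finset.powersetCard d (Finset.univ : Finset (Fin n))).attach,
      ‖subDisc σ α I.1 (Finset.mem_powersetCard.mp I.2).2‖

/-- `M(α,β) = (1/|Δ_K|^{1/2}) max_{I ⊆ [n+1], |I| = d} |disc(α(β)_I)|^{1/2}`, where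
`α(β) = (α_1, …, α_n, β)`. -/
noncomputable def Mht {K : Type*} [Field K] [NumberField K] {d n : ℕ}
    (σ : Fin d → (K →+* ℂ)) (α : Fin n → K) (β : K) : ℝ :=
  (1 / Real.sqrt |(NumberField.discr K : ℝ)|) *
    ⨆ I : {I : Finset (Fin (n + 1)) // I ∈ Finset.powersetCard d Finset.univ},
      Real.sqrt (‖subDisc σ (Fin.snoc α β) I.1
        (Finset.mem_powersetCard.mp I.2).2‖)


private lemma abs_det_le_aux {d : ℕ} (M : Matrix (Fin d) (Fin d) ℂ) (b : Fin d → ℝ)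
    (_hb : ∀ i, 0 ≤ b i) (h : ∀ i j, ‖M i j‖ ≤ b i) :
    ‖M.det‖ ≤ (d.factorial : ℝ) * ∏ i, b i := by
  rw [Matrix.det_apply]
  calc ‖∑ π : Equiv.Perm (Fin d), Equiv.Perm.sign π • ∏ i, M (π i) i‖
      ≤ ∑ π : Equiv.Perm (Fin d), ‖Equiv.Perm.sign π • ∏ i, M (π i) i‖ :=
        norm_sum_le _ _
    _ ≤ ∑ _π : Equiv.Perm (Fin d), ∏ i, b i := by
        refine Finset.sum_le_sum fun π _ => ?_
        have habs : ‖Equiv.Perm.sign π • ∏ i, M (π i) i‖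
            = ‖∏ i, M (π i) i‖ := by
          rcases Int.units_eq_one_or (Equiv.Perm.sign π) with hs | hs <;> simp [hs]
        rw [habs, norm_prod]
        calc ∏ i, ‖M (π i) i‖ ≤ ∏ i, b (π i) :=
              Finset.prod_le_prod (fun i _ => norm_nonneg _)
                (fun i _ => h (π i) i)
          _ = ∏ i, b i := Equiv.prod_comp π b
    _ = (d.factorial : ℝ) * ∏ i, b i := by
        rw [Finset.sum_const, Finset.card_univ, Fintype.card_perm, Fintype.card_fin,
          nsmul_eq_mul]

/-- **Lemma 3.1(3), first bound (Fukshansky–Shi).** Let `K` be a number field of degree `d`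
with embeddings `σ_1, …, σ_d : K → ℂ`, let `n ≥ d`, and let `α ∈ K^n`. Then
`D(α) ≤ ((d!)²/|Δ_K|) binom(n,d) H_K(α)²`. -/
theorem Dht_le {K : Type*} [Field K] [NumberField K] {d n : ℕ}
    (σ : Fin d → (K →+* ℂ)) (hσ : Function.Injective σ)
    (hd : Module.finrank ℚ K = d) (hn : d ≤ n)
    (α : Fin n → K) :
    Dht σ α ≤ ((Nat.factorial d : ℝ) ^ 2 / |(NumberField.discr K : ℝ)|) *
      (Nat.choose n d : ℝ) * heightK α ^ 2 := by
  classical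
  have hd1 : 0 < d := hd ▸ Module.finrank_pos
  haveI : Nonempty (Fin n) := ⟨⟨0, lt_of_lt_of_le hd1 hn⟩⟩
  set g : (K →+* ℂ) → ℝ := fun φ => max 1 (⨆ j, ‖φ (α j)‖) with hgdef
  have hg1 : ∀ φ, (1 : ℝ) ≤ g φ := fun φ => le_max_left _ _
  have hentry : ∀ (φ : K →+* ℂ) (k : Fin n), ‖φ (α k)‖ ≤ g φ := fun φ k =>
    le_trans (le_ciSup (f := fun j => ‖φ (α j)‖) ((Set.finite_range _).bddAbove) k) (le_max_right _ _)
  have hcard : Fintype.card (K →+* ℂ) = d := by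
    rw [NumberField.Embeddings.card K ℂ, hd]
  have hbij : Function.Bijective σ :=
    (Fintype.bijective_iff_injective_and_card σ).2 ⟨hσ, by simp [hcard]⟩
  set A : ℝ := ∏ w : NumberField.InfinitePlace K, max 1 (⨆ i, w (α i)) ^ w.mult with hAdef
  have hprodA : ∏ i : Fin d, g (σ i) = A := by
    rw [Fintype.prod_bijective σ hbij _ g (fun _ => rfl)]
    have hsurj : Function.Surjective (NumberField.InfinitePlace.mk (K := K)) := fun w =>
      ⟨w.embedding, NumberField.InfinitePlace.mk_embedding w⟩
    calc ∏ φ : K →+* ℂ, g φ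
        = ∏ φ : K →+* ℂ,
            (fun w : NumberField.InfinitePlace K => max 1 (⨆ j, w (α j)))
              (NumberField.InfinitePlace.mk φ) := rfl
      _ = A := by
          rw [Finset.prod_comp (fun w : NumberField.InfinitePlace K => max 1 (⨆ j, w (α j)))
              NumberField.InfinitePlace.mk,
            Finset.image_univ_of_surjective hsurj, hAdef]
          exact Finset.prod_congr rfl fun w _ => by
            rw [NumberField.InfinitePlace.card_filter_mk_eq]
  have hA1 : (1 : ℝ) ≤ A := by
    rw [← hprodA]
    calc (1 : ℝ) = ∏ _i : Fin d, 1 := by simp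
      _ ≤ ∏ i : Fin d, g (σ i) :=
          Finset.prod_le_prod (fun _ _ => zero_le_one) (fun i _ => hg1 _)
  set F : ℝ := ∏ᶠ v : HeightOneSpectrum (𝓞 K), max 1 (⨆ i, finAbs v (α i)) with hFdef
  have hF1 : (1 : ℝ) ≤ F := by
    by_cases hfin : (Function.mulSupport fun v : HeightOneSpectrum (𝓞 K) =>
        max 1 (⨆ i, finAbs v (α i))).Finite
    · rw [hFdef, finprod_eq_prod _ hfin]
      calc (1 : ℝ) = ∏ _v ∈ hfin.toFinset, 1 := by simp
        _ ≤ _ := Finset.prod_le_prod (fun _ _ => zero_le_one)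
            (fun v _ => le_max_left _ _)
    · rw [hFdef, finprod_of_infinite_mulSupport hfin]
  have hHA : A ≤ heightK α := by
    have : heightK α = A * F := rfl
    rw [this]
    exact le_mul_of_one_le_right (le_trans zero_le_one hA1) hF1
  -- bound each term of the sum
  have hterm : ∀ I ∈ (Finset.powersetCard d (Finset.univ : Finset (Fin n))).attach,
      ‖subDisc σ α I.1 (Finset.mem_powersetCard.mp I.2).2‖
        ≤ ((d.factorial : ℝ) * A) ^ 2 := by
    intro I _
    have hdet : ‖(Matrix.of fun i j =>
        σ i (α ((I.1.orderIsoOfFin (Finset.mem_powersetCard.mp I.2).2 j : Fin n)))).det‖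
          ≤ (d.factorial : ℝ) * A := by
      rw [← hprodA]
      exact abs_det_le_aux _ (fun i => g (σ i))
        (fun i => le_trans zero_le_one (hg1 _)) (fun i j => hentry _ _)
    calc ‖subDisc σ α I.1 (Finset.mem_powersetCard.mp I.2).2‖
        = ‖(Matrix.of fun i j =>
            σ i (α ((I.1.orderIsoOfFin (Finset.mem_powersetCard.mp I.2).2 j : Fin n)))).det‖
              ^ 2 := by rw [subDisc, norm_pow]
      _ ≤ ((d.factorial : ℝ) * A) ^ 2 :=
          pow_le_pow_left₀ (norm_nonneg _) hdet 2
  have hsum : ∑ I ∈ (Finset.powersetCard d (Finset.univ : Finset (Fin n))).attach,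
      ‖subDisc σ α I.1 (Finset.mem_powersetCard.mp I.2).2‖
        ≤ (n.choose d : ℝ) * ((d.factorial : ℝ) * A) ^ 2 := by
    calc _ ≤ ∑ _I ∈ (Finset.powersetCard d (Finset.univ : Finset (Fin n))).attach,
          ((d.factorial : ℝ) * A) ^ 2 := Finset.sum_le_sum hterm
      _ = (n.choose d : ℝ) * ((d.factorial : ℝ) * A) ^ 2 := by
          rw [Finset.sum_const, Finset.card_attach, Finset.card_powersetCard,
            Finset.card_univ, Fintype.card_fin, nsmul_eq_mul]
  have hΔ : (0 : ℝ) < |(NumberField.discr K : ℝ)| := by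
    have := NumberField.discr_ne_zero K
    simpa [abs_pos] using this
  have h1 : (0 : ℝ) ≤ 1 / |(NumberField.discr K : ℝ)| := by positivity
  calc Dht σ α ≤ (1 / |(NumberField.discr K : ℝ)|) *
        ((n.choose d : ℝ) * ((d.factorial : ℝ) * A) ^ 2) := by
        rw [Dht]; exact mul_le_mul_of_nonneg_left hsum h1
    _ = ((d.factorial : ℝ) ^ 2 / |(NumberField.discr K : ℝ)|) * (n.choose d : ℝ) * A ^ 2 := by
        ring
    _ ≤ ((d.factorial : ℝ) ^ 2 / |(NumberField.discr K : ℝ)|) * (n.choose d : ℝ) *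
          heightK α ^ 2 := by
        refine mul_le_mul_of_nonneg_left
          (pow_le_pow_left₀ (le_trans zero_le_one hA1) hHA 2) ?_
        positivity
end

section
/- Let K be a totally real number field of degree d over Q, let n > d, and let α = (α_1,…,α_n) be an n-tuple of totally nonnegative algebraic integers with O_K = span_Z{α_1,…,α_n}. If Sg(α) ≠ C_Q(α) ∩ O_K, then the absolute Weil height H(α) = H_K(α)^{1/d} satisfies H(α) ≥ ( 2·|Δ_K|·√(n−d+1)·(n−d−1)! / (d!·n!) )^{1/(2d)}. -/
open scoped NumberField Pointwise
open IsDedekindDomain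

/-- `disc(γ_I)`: the discriminant of the sub-`d`-tuple of `γ` indexed by the subset `I`
of cardinality `d`, i.e. the square of the determinant of the matrix `(σ_i(γ_{i_j}))`. -/
noncomputable def subDiscR {K : Type*} [Field K] {d m : ℕ} (σ : Fin d → (K →+* ℝ))
    (γ : Fin m → K) (I : Finset (Fin m)) (hI : I.card = d) : ℝ :=
  (Matrix.of fun i j => σ i (γ ((I.orderIsoOfFin hI j : Fin m)))).det ^ 2

/-- `D(α) = (1/|Δ_K|) ∑_{I ⊆ [n], |I| = d} |disc(α_I)|`. -/
noncomputable def DhtR {K : Type*} [Field K] [NumberField K] {d n : ℕ}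
    (σ : Fin d → (K →+* ℝ)) (α : Fin n → K) : ℝ :=
  (1 / |(NumberField.discr K : ℝ)|) *
    ∑ I ∈ (Finset.powersetCard d (Finset.univ : Finset (Fin n))).attach,
      |subDiscR σ α I.1 (Finset.mem_powersetCard.mp I.2).2|

/-- `M(α,β) = (1/|Δ_K|^{1/2}) max_{I ⊆ [n+1], |I| = d} |disc(α(β)_I)|^{1/2}`, where
`α(β) = (α_1, …, α_n, β)`. -/
noncomputable def MhtR {K : Type*} [Field K] [NumberField K] {d n : ℕ}
    (σ : Fin d → (K →+* ℝ)) (α : Fin n → K) (β : K) : ℝ :=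
  (1 / Real.sqrt |(NumberField.discr K : ℝ)|) *
    ⨆ I : {I : Finset (Fin (n + 1)) // I ∈ Finset.powersetCard d Finset.univ},
      Real.sqrt |subDiscR σ (Fin.snoc α β) I.1 (Finset.mem_powersetCard.mp I.2).2|

/-- The additive semigroup `Sg(α) = { ∑ α_i x_i : x ∈ ℤ^n_{≥0} }` generated by the `α_i`,
viewed inside `K`. -/
def Sg {K : Type*} [Field K] [NumberField K] {n : ℕ} (α : Fin n → 𝓞 K) : Set K :=
  {β | ∃ x : Fin n → ℕ, β = ∑ i, (x i : K) * (α i : K)}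

/-- `Sg_s(α)`: the set of elements of `Sg(α)` admitting at least `s` distinct
representations `x ∈ ℤ^n_{≥0}` with `∑ α_i x_i = β`. -/
def SgS {K : Type*} [Field K] [NumberField K] {n : ℕ} (s : ℕ) (α : Fin n → 𝓞 K) : Set K :=
  {β | ∃ T : Finset (Fin n → ℕ), s ≤ T.card ∧ ∀ x ∈ T, β = ∑ i, (x i : K) * (α i : K)}

/-- The rational cone `C_ℚ(α) = { ∑ α_i x_i : x ∈ ℚ^n_{≥0} }`, viewed inside `K`. -/
def CQ {K : Type*} [Field K] [NumberField K] {n : ℕ} (α : Fin n → 𝓞 K) : Set K :=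
  {β | ∃ x : Fin n → ℚ, (∀ i, 0 ≤ x i) ∧ β = ∑ i, (x i : K) * (α i : K)}

/-- The Minkowski embedding `K → ℝ^d` attached to the real embeddings `σ_1, …, σ_d`. -/
def emb {K : Type*} [Field K] {d : ℕ} (σ : Fin d → (K →+* ℝ)) (γ : K) : Fin d → ℝ :=
  fun j => σ j γ

/-- The real cone in `ℝ^d` spanned by the Minkowski images of the `α_i`. -/
def realCone {K : Type*} [Field K] [NumberField K] {d n : ℕ} (σ : Fin d → (K →+* ℝ))
    (α : Fin n → 𝓞 K) : Set (Fin d → ℝ) :=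
  {y | ∃ x : Fin n → ℝ, (∀ i, 0 ≤ x i) ∧ y = ∑ i, x i • emb σ (α i : K)}

/-- `r(β)`: the number of distinct representations of `β` in terms of `α`. -/
noncomputable def reps {K : Type*} [Field K] [NumberField K] {n : ℕ} (α : Fin n → 𝓞 K)
    (β : K) : ℕ :=
  Set.ncard {x : Fin n → ℕ | β = ∑ i, (x i : K) * (α i : K)}

/-!
Pick `d` of the `αᵢ` forming a `ℚ`-basis of `K`. Their embedding matrix `(σⱼ(α_{v k}))` is the
embedding matrix of an integral basis `b` times a nonsingular integer matrix, so
`|Δ_K|^{1/2} = |det σ(b)| ≤ |det σ(α_v)| ≤ d! ∏ⱼ maxᵢ |σⱼ(αᵢ)| ≤ d! H_K(α)`; the last step holds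
because the `αᵢ` are integral, so only the archimedean places contribute to `H_K(α)`. Together
with `2 d! √(n-d+1) (n-d-1)! ≤ n!` this gives `2|Δ_K|√(n-d+1)(n-d-1)!/(d! n!) ≤ H_K(α)²`, and
the claim follows by taking `2d`-th roots. The factorial estimate fails only for `d = 1, n = 2`;
there `K = ℚ`, and `Sg(α) ≠ C_ℚ(α) ∩ ℤ` forces some `|αᵢ| ≥ 2`, whence `H_K(α) ≥ 2 |Δ_K|^{1/2}`.
-/

open NumberField

section Heights

variable {K : Type*} [Field K]

lemma NumberField.InfinitePlace.mk_ofRealHom_comp_injective :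
    Function.Injective fun φ : K →+* ℝ => InfinitePlace.mk (Complex.ofRealHom.comp φ) := by
  intro φ ψ h
  have hreal :
      ComplexEmbedding.conjugate (Complex.ofRealHom.comp φ) = Complex.ofRealHom.comp φ := by
    ext x
    simp
  have hcomp : Complex.ofRealHom.comp φ = Complex.ofRealHom.comp ψ := by
    simpa only [InfinitePlace.mk_eq_iff, hreal, or_self] using h
  ext x
  exact Complex.ofReal_injective (RingHom.congr_fun hcomp x)

variable [NumberField K]

lemma finAbs_coe_le_one (v : HeightOneSpectrum (𝓞 K)) (γ : 𝓞 K) : finAbs v (γ : K) ≤ 1 := by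
  have hN : (1 : NNReal) < Ideal.absNorm v.asIdeal := by
    have h0 : Ideal.absNorm v.asIdeal ≠ 0 := fun h => v.ne_bot (Ideal.absNorm_eq_zero_iff.mp h)
    have h1 : Ideal.absNorm v.asIdeal ≠ 1 := fun h =>
      v.isPrime.ne_top (Ideal.absNorm_eq_one_iff.mp h)
    exact_mod_cast (by omega : 1 < Ideal.absNorm v.asIdeal)
  have := (WithZeroMulInt.toNNReal_strictMono hN).monotone (v.valuation_le_one (K := K) γ)
  rw [map_one] at this
  exact_mod_cast this

lemma heightK_coe_eq_prod_infinitePlace {m : ℕ} (γ : Fin m → 𝓞 K) :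
    heightK (fun i => (γ i : K)) =
      ∏ w : InfinitePlace K, max 1 (⨆ i, w (γ i)) ^ w.mult := by
  have hfin (v : HeightOneSpectrum (𝓞 K)) : max 1 (⨆ i, finAbs v (γ i : K)) = 1 :=
    max_eq_left (Real.iSup_le (fun i => finAbs_coe_le_one v (γ i)) zero_le_one)
  rw [heightK, finprod_congr hfin, finprod_one, mul_one]

lemma heightK_coe_nonneg {m : ℕ} (γ : Fin m → 𝓞 K) : 0 ≤ heightK (fun i => (γ i : K)) := by
  rw [heightK_coe_eq_prod_infinitePlace]
  positivity

lemma prod_max_abs_le_heightK {ι : Type*} [Fintype ι] (σ : ι → (K →+* ℝ))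
    (hσ : Function.Injective σ) {m : ℕ} (γ : Fin m → 𝓞 K) :
    ∏ j, max 1 (⨆ i, |σ j (γ i)|) ≤ heightK (fun i => (γ i : K)) := by
  classical
  set p : ι ↪ InfinitePlace K :=
    ⟨fun j => InfinitePlace.mk (Complex.ofRealHom.comp (σ j)),
      InfinitePlace.mk_ofRealHom_comp_injective.comp hσ⟩
  set f : InfinitePlace K → ℝ := fun w => max 1 (⨆ i, w (γ i))
  have hf (w : InfinitePlace K) : 1 ≤ f w := le_max_left _ _
  calc ∏ j, max 1 (⨆ i, |σ j (γ i)|) = ∏ w ∈ Finset.univ.map p, f w := by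
        simp [p, f]
    _ ≤ ∏ w, f w := Finset.prod_le_prod_of_subset_of_one_le (Finset.subset_univ _)
        (fun w _ => zero_le_one.trans (hf w)) (fun w _ _ => hf w)
    _ ≤ ∏ w, f w ^ w.mult := Finset.prod_le_prod (fun w _ => zero_le_one.trans (hf w))
        (fun w _ => le_self_pow₀ (hf w) InfinitePlace.mult_ne_zero)
    _ = heightK (fun i => (γ i : K)) := (heightK_coe_eq_prod_infinitePlace γ).symm

end Heights

lemma Matrix.abs_det_le_factorial_mul_prod {n R : Type*} [Fintype n] [DecidableEq n] [CommRing R]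
    [LinearOrder R] [IsStrictOrderedRing R] (A : Matrix n n R) (m : n → R)
    (h : ∀ i j, |A i j| ≤ m i) : |A.det| ≤ (Fintype.card n).factorial * ∏ i, m i := by
  calc |A.det| ≤ ∑ τ : Equiv.Perm n, |Equiv.Perm.sign τ • ∏ i, A (τ i) i| := by
        rw [Matrix.det_apply]
        exact Finset.abs_sum_le_sum_abs _ _
    _ = ∑ τ : Equiv.Perm n, ∏ i, |A (τ i) i| := by
        refine Finset.sum_congr rfl fun τ _ => ?_
        rcases Int.units_eq_one_or (Equiv.Perm.sign τ) with h | h <;> simp [h, Finset.abs_prod]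
    _ ≤ ∑ τ : Equiv.Perm n, ∏ i, m (τ i) :=
        Finset.sum_le_sum fun τ _ =>
          Finset.prod_le_prod (fun i _ => abs_nonneg _) fun i _ => h (τ i) i
    _ = (Fintype.card n).factorial * ∏ i, m i := by
        simp only [Equiv.prod_comp, Finset.sum_const, Finset.card_univ, Fintype.card_perm,
          nsmul_eq_mul]

section RingOfIntegers

variable {K : Type*} [Field K] [NumberField K]

lemma discr_eq_det_sq {ι : Type*} [Fintype ι] [DecidableEq ι] (b : Module.Basis ι ℤ (𝓞 K))
    (σ : ι → (K →+* ℝ)) (hσ : Function.Injective σ) :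
    (discr K : ℝ) = (Matrix.of fun i j => σ i (b j : K)).det ^ 2 := by
  set G : ι → (K →ₐ[ℚ] ℂ) := fun j => (Complex.ofRealHom.comp (σ j)).toRatAlgHom
  have hG : Function.Injective G := by
    intro i j h
    apply hσ
    ext x
    exact Complex.ofReal_injective (AlgHom.congr_fun h x :)
  have hcard : Fintype.card ι = Fintype.card (K →ₐ[ℚ] ℂ) := by
    rw [← Module.finrank_eq_card_basis b, RingOfIntegers.rank, AlgHom.card ℚ K ℂ]
  set e : ι ≃ (K →ₐ[ℚ] ℂ) :=
    Equiv.ofBijective G ((Fintype.bijective_iff_injective_and_card G).mpr ⟨hG, hcard⟩)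
  set b' := b.localizationLocalization ℚ (nonZeroDivisors ℤ) K
  have key := Algebra.discr_eq_det_embeddingsMatrixReindex_pow_two ℚ ℂ b' e
  rw [Algebra.discr_localizationLocalization, NumberField.discr_eq_discr] at key
  have hM : Algebra.embeddingsMatrixReindex ℚ ℂ b' e =
      Complex.ofRealHom.mapMatrix (Matrix.of fun i j => σ i (b j : K)).transpose := by
    ext i j
    simp [Algebra.embeddingsMatrixReindex, Algebra.embeddingsMatrix, e, G, b']
  rw [hM, ← RingHom.map_det, Matrix.det_transpose] at key
  apply Complex.ofReal_injective
  simpa using key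

lemma abs_discr_mul_det_sq_le {ι : Type*} [Fintype ι] [DecidableEq ι]
    (b : Module.Basis ι ℤ (𝓞 K)) (σ : ι → (K →+* ℝ)) (hσ : Function.Injective σ) {n : ℕ}
    (α : Fin n → 𝓞 K) (v : ι → Fin n) :
    |(discr K : ℝ)| * (b.det (α ∘ v) : ℝ) ^ 2 ≤
      ((Fintype.card ι).factorial * heightK (fun i => (α i : K))) ^ 2 := by
  set B : Matrix ι ι ℝ := Matrix.of fun i j => σ i (b j : K)
  have hfactor : (Matrix.of fun i k => σ i (α (v k) : K)) =
      B * (Int.castRingHom ℝ).mapMatrix (b.toMatrix (α ∘ v)) := by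
    ext i k
    rw [Matrix.of_apply, ← Function.comp_apply (f := α), ← b.sum_toMatrix_smul_self (α ∘ v) k]
    simp [B, Matrix.mul_apply, mul_comm]
  have hbound : |(Matrix.of fun i k => σ i (α (v k) : K)).det| ≤
      (Fintype.card ι).factorial * heightK (fun i => (α i : K)) := by
    refine (Matrix.abs_det_le_factorial_mul_prod _ (fun i => max 1 (⨆ k, |σ i (α k)|))
      fun i k => le_max_of_le_right ?_).trans ?_
    · exact le_ciSup (f := fun k => |σ i (α k)|) (Set.finite_range _).bddAbove (v k)
    · exact mul_le_mul_of_nonneg_left (prod_max_abs_le_heightK σ hσ α) (by positivity)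
  rw [discr_eq_det_sq b σ hσ, abs_of_nonneg (sq_nonneg _), ← mul_pow, ← sq_abs]
  refine pow_le_pow_left₀ (abs_nonneg _) ?_ 2
  rwa [hfactor, Matrix.det_mul, ← RingHom.map_det, ← b.det_apply] at hbound

lemma span_rat_coe_eq_top {ι : Type*} (α : ι → 𝓞 K)
    (hspan : Submodule.span ℤ (Set.range α) = ⊤) :
    Submodule.span ℚ (Set.range fun i => (α i : K)) = ⊤ := by
  rw [eq_top_iff, ← (integralBasis K).span_eq, Submodule.span_le]
  rintro _ ⟨t, rfl⟩
  have hmem := Submodule.mem_map_of_mem (f := (Algebra.linearMap (𝓞 K) K).restrictScalars ℤ)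
    (hspan ▸ Submodule.mem_top : RingOfIntegers.basis K t ∈ Submodule.span ℤ (Set.range α))
  rw [Submodule.map_span, ← Set.range_comp] at hmem
  rw [integralBasis_apply]
  exact Submodule.span_le_restrictScalars ℤ ℚ _ hmem

lemma exists_det_comp_ne_zero {ι κ : Type*} [Fintype ι] [DecidableEq ι]
    (b : Module.Basis ι ℤ (𝓞 K)) (α : κ → 𝓞 K) (hspan : Submodule.span ℤ (Set.range α) = ⊤) :
    ∃ v : ι → κ, b.det (α ∘ v) ≠ 0 := by
  obtain ⟨μ, a, -, hsp, hli⟩ := exists_linearIndependent' ℚ fun i => (α i : K)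
  have := hli.finite
  have : Fintype μ := Fintype.ofFinite μ
  have hcard : Fintype.card ι = Fintype.card μ := by
    rw [← Module.finrank_eq_card_basis b, RingOfIntegers.rank,
      Module.finrank_eq_card_basis (Module.Basis.mk hli (by rw [hsp, span_rat_coe_eq_top α hspan]))]
  set e := Fintype.equivOfCardEq hcard
  refine ⟨a ∘ e, ?_⟩
  have hliZ : LinearIndependent ℤ (α ∘ a ∘ e) :=
    LinearIndependent.of_comp ((Algebra.linearMap (𝓞 K) K).restrictScalars ℤ)
      ((hli.comp e e.injective).restrict_scalars' ℤ)
  rw [b.det_apply, ← Matrix.nonsingular_iff_det_ne_zero, ← Matrix.linearIndependent_col_iff]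
  exact hliZ.map' b.equivFun.toLinearMap b.equivFun.ker

lemma abs_discr_le_sq_heightK {ι : Type*} [Fintype ι] (σ : ι → (K →+* ℝ))
    (hσ : Function.Injective σ) (hcard : Fintype.card ι = Module.finrank ℚ K) {n : ℕ}
    (α : Fin n → 𝓞 K) (hspan : Submodule.span ℤ (Set.range α) = ⊤) :
    |(discr K : ℝ)| ≤ ((Fintype.card ι).factorial * heightK (fun i => (α i : K))) ^ 2 := by
  classical
  let b : Module.Basis ι ℤ (𝓞 K) := (RingOfIntegers.basis K).reindex (Fintype.equivOfCardEq (by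
    rw [← Module.finrank_eq_card_chooseBasisIndex, RingOfIntegers.rank, hcard]))
  obtain ⟨v, hv⟩ := exists_det_comp_ne_zero b α hspan
  have hv1 : (1 : ℝ) ≤ (b.det (α ∘ v) : ℝ) ^ 2 :=
    (one_le_sq_iff_one_le_abs _).mpr (by exact_mod_cast Int.one_le_abs hv)
  calc |(discr K : ℝ)| ≤ |(discr K : ℝ)| * (b.det (α ∘ v) : ℝ) ^ 2 :=
        le_mul_of_one_le_right (abs_nonneg _) hv1
    _ ≤ _ := abs_discr_mul_det_sq_le b σ hσ α v

lemma Sg_subset_CQ_inter {n : ℕ} (α : Fin n → 𝓞 K) :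
    Sg α ⊆ CQ α ∩ Set.range (fun γ : 𝓞 K => (γ : K)) := by
  rintro _ ⟨x, rfl⟩
  exact ⟨⟨fun i => x i, fun i => by positivity, by simp⟩, ∑ i, x i • α i, by simp⟩

lemma Sg_eq_CQ_inter_of_span_singleton {n : ℕ} (α : Fin n → 𝓞 K) (σ₀ : K →+* ℝ)
    (hα : ∀ i, 0 ≤ σ₀ (α i)) (i₀ : Fin n) (hgen : Submodule.span ℤ {α i₀} = ⊤) :
    Sg α = CQ α ∩ Set.range (fun γ : 𝓞 K => (γ : K)) := by
  refine (Sg_subset_CQ_inter α).antisymm ?_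
  rintro _ ⟨⟨q, hq, hβ⟩, γ, rfl⟩
  beta_reduce at hβ
  obtain ⟨m, rfl⟩ := Submodule.mem_span_singleton.mp (hgen ▸ Submodule.mem_top : γ ∈ _)
  have hne : (α i₀ : K) ≠ 0 := by
    intro h
    rw [RingOfIntegers.coe_eq_zero_iff.mp h, Submodule.span_singleton_eq_bot.mpr rfl] at hgen
    exact bot_ne_top hgen
  have hpos : 0 < σ₀ (α i₀) := (hα i₀).lt_of_ne' ((map_ne_zero σ₀).mpr hne)
  have hm : 0 ≤ m := by
    have h : 0 ≤ σ₀ ((m • α i₀ : 𝓞 K) : K) := by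
      rw [hβ, map_sum]
      exact Finset.sum_nonneg fun i _ => by
        rw [map_mul, map_ratCast]
        exact mul_nonneg (Rat.cast_nonneg.mpr (hq i)) (hα i)
    rw [show ((m • α i₀ : 𝓞 K) : K) = m * α i₀ by simp [zsmul_eq_mul], map_mul,
      map_intCast] at h
    exact_mod_cast nonneg_of_mul_nonneg_left h hpos
  lift m to ℕ using hm
  exact ⟨Pi.single i₀ m, by simp [Pi.single_apply]⟩

lemma exists_two_le_abs_repr (b : Module.Basis (Fin 1) ℤ (𝓞 K)) (σ₀ : K →+* ℝ) {n : ℕ}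
    (α : Fin n → 𝓞 K) (hα : ∀ i, 0 ≤ σ₀ (α i))
    (hspan : Submodule.span ℤ (Set.range α) = ⊤)
    (hne : Sg α ≠ CQ α ∩ Set.range (fun γ : 𝓞 K => (γ : K))) :
    ∃ i, 2 ≤ |b.repr (α i) 0| := by
  by_contra! hsmall
  have hrepr (x : 𝓞 K) : x = b.repr x 0 • b 0 := by simpa using (b.sum_repr x).symm
  obtain ⟨i₀, hi₀⟩ : ∃ i, α i ≠ 0 := by
    by_contra! h0
    rw [Submodule.span_eq_bot.mpr (by rintro _ ⟨i, rfl⟩; exact h0 i)] at hspan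
    exact bot_ne_top hspan
  obtain ⟨c, hc_repr⟩ : ∃ c, b.repr (α i₀) 0 = c := ⟨_, rfl⟩
  have hc : c * c = 1 := by
    have hc0 : c ≠ 0 := fun h => hi₀ (by rw [hrepr (α i₀), hc_repr, h, zero_smul])
    have := hc_repr ▸ hsmall i₀
    have := abs_pos.mpr hc0
    rw [← abs_mul_abs_self, show |c| = 1 by omega, mul_one]
  refine hne (Sg_eq_CQ_inter_of_span_singleton α σ₀ hα i₀ ?_)
  rw [eq_top_iff, ← b.span_eq, Submodule.span_le]
  rintro _ ⟨t, rfl⟩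
  refine Submodule.mem_span_singleton.mpr ⟨c, ?_⟩
  rw [Subsingleton.elim t 0, hrepr (α i₀), hc_repr, smul_smul, hc, one_smul]

lemma four_mul_abs_discr_le_sq_heightK (hK : Module.finrank ℚ K = 1) (σ₀ : K →+* ℝ) {n : ℕ}
    (α : Fin n → 𝓞 K) (hα : ∀ i, 0 ≤ σ₀ (α i))
    (hspan : Submodule.span ℤ (Set.range α) = ⊤)
    (hne : Sg α ≠ CQ α ∩ Set.range (fun γ : 𝓞 K => (γ : K))) :
    4 * |(discr K : ℝ)| ≤ heightK (fun i => (α i : K)) ^ 2 := by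
  let b : Module.Basis (Fin 1) ℤ (𝓞 K) := (RingOfIntegers.basis K).reindex
    (Fintype.equivFinOfCardEq (by
      rw [← Module.finrank_eq_card_chooseBasisIndex, RingOfIntegers.rank, hK]))
  obtain ⟨i, hi⟩ := exists_two_le_abs_repr b σ₀ α hα hspan hne
  have h4 : (4 : ℝ) ≤ (b.det (α ∘ fun _ => i) : ℝ) ^ 2 := by
    rw [b.det_apply, Matrix.det_fin_one, b.toMatrix_apply, Function.comp_apply, ← sq_abs]
    have : (2 : ℝ) ≤ |(b.repr (α i) 0 : ℝ)| := by exact_mod_cast hi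
    nlinarith
  have := abs_discr_mul_det_sq_le b (fun _ => σ₀) (Function.injective_of_subsingleton _) α
    (fun _ => i)
  rw [Fintype.card_fin, Nat.factorial_one, Nat.cast_one, one_mul] at this
  nlinarith [abs_nonneg (discr K : ℝ)]

end RingOfIntegers

lemma mul_factorial_mul_factorial_le_factorial {d k : ℕ} (hd : 1 ≤ d) :
    (d + k + 1) * (k + 1) * (d.factorial * k.factorial) ≤ (d + k + 1).factorial := by
  have hchoose : k + 1 ≤ (d + k).choose k := by
    calc k + 1 = (k + 1).choose k := (Nat.choose_succ_self_right k).symm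
      _ ≤ (d + k).choose k := Nat.choose_le_choose k (by omega)
  rw [Nat.factorial_succ, ← Nat.add_choose_mul_factorial_mul_factorial d k]
  calc (d + k + 1) * (k + 1) * (d.factorial * k.factorial)
      ≤ (d + k + 1) * (d + k).choose k * (d.factorial * k.factorial) := by gcongr
    _ = (d + k + 1) * ((d + k).choose k * d.factorial * k.factorial) := by ring

lemma two_mul_factorial_mul_sqrt_mul_factorial_le {d n : ℕ} (hd : 1 ≤ d) (hn : d < n)
    (hdn : ¬(d = 1 ∧ n = 2)) :
    2 * d.factorial * √((n : ℝ) - d + 1) * (n - d - 1).factorial ≤ n.factorial := by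
  obtain ⟨k, rfl⟩ : ∃ k, n = d + k + 1 := ⟨n - d - 1, by omega⟩
  have hk : d + k + 1 - d - 1 = k := by omega
  have hsqrt : 2 * √((k : ℝ) + 2) ≤ (d + k + 1) * (k + 1) := by
    have hsq : 2 ^ 2 * (k + 2) ≤ ((d + k + 1) * (k + 1)) ^ 2 := by
      rcases k with _ | k
      · have : 2 ≤ d := by omega
        nlinarith
      · have : 2 * (k + 3) ≤ (d + k + 2) * (k + 2) := by nlinarith
        nlinarith
    calc 2 * √((k : ℝ) + 2) = √(2 ^ 2 * ((k : ℝ) + 2)) := by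
          rw [Real.sqrt_mul' _ (by positivity), Real.sqrt_sq two_pos.le]
      _ ≤ √(((d + k + 1) * (k + 1)) ^ 2) := Real.sqrt_le_sqrt (by exact_mod_cast hsq)
      _ = (d + k + 1) * (k + 1) := Real.sqrt_sq (by positivity)
  have hfact : ((d + k + 1) * (k + 1) * (d.factorial * k.factorial) : ℝ) ≤
      (d + k + 1).factorial := by
    exact_mod_cast mul_factorial_mul_factorial_le_factorial (k := k) hd
  rw [hk, show ((d + k + 1 : ℕ) : ℝ) - d + 1 = k + 2 by push_cast; ring]
  calc 2 * d.factorial * √((k : ℝ) + 2) * k.factorial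
      = 2 * √((k : ℝ) + 2) * (d.factorial * k.factorial) := by ring
    _ ≤ (d + k + 1) * (k + 1) * (d.factorial * k.factorial) := by gcongr
    _ ≤ _ := hfact

lemma Real.rpow_one_div_two_mul_le_rpow_one_div {a b : ℝ} (ha : 0 ≤ a) (hb : 0 ≤ b)
    (hab : a ≤ b ^ 2) (d : ℕ) : a ^ ((1 : ℝ) / (2 * d)) ≤ b ^ ((1 : ℝ) / d) :=
  calc a ^ ((1 : ℝ) / (2 * d)) ≤ (b ^ 2) ^ ((1 : ℝ) / (2 * d)) :=
        Real.rpow_le_rpow ha hab (by positivity)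
    _ = b ^ ((1 : ℝ) / d) := by
        rw [← Real.rpow_natCast, ← Real.rpow_mul hb]
        congr 1
        push_cast
        ring

/-- **Corollary 3.4 (Fukshansky–Shi).** Let `K` be a totally real number field of degree
`d`, `n > d`, and `α` an `n`-tuple of totally nonnegative algebraic integers spanning
`𝓞_K` over `ℤ`. If `Sg(α) ≠ C_ℚ(α) ∩ 𝓞_K`, then the absolute Weil height
`H(α) = H_K(α)^{1/d}` satisfies
`H(α) ≥ (2 |Δ_K| √(n−d+1) (n−d−1)! / (d! n!))^{1/(2d)}`. -/
theorem absolute_height_lower_bound {K : Type*} [Field K] [NumberField K] {d n : ℕ}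
    (σ : Fin d → (K →+* ℝ)) (hσ : Function.Injective σ)
    (hd : Module.finrank ℚ K = d) (hn : d < n)
    (α : Fin n → 𝓞 K)
    (hα : ∀ i j, 0 ≤ σ j ((α i : K)))
    (hspan : Submodule.span ℤ (Set.range α) = ⊤)
    (hne : Sg α ≠ CQ α ∩ Set.range (fun γ : 𝓞 K => (γ : K))) :
    (2 * |(NumberField.discr K : ℝ)| * Real.sqrt ((n : ℝ) - d + 1) *
        (Nat.factorial (n - d - 1) : ℝ) /
          ((Nat.factorial d : ℝ) * (Nat.factorial n : ℝ))) ^ ((1 : ℝ) / (2 * d)) ≤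
      heightK (fun i => (α i : K)) ^ ((1 : ℝ) / d) := by
  refine Real.rpow_one_div_two_mul_le_rpow_one_div (by positivity) (heightK_coe_nonneg α) ?_ d
  set H := heightK (fun i => (α i : K))
  by_cases hsmall : d = 1 ∧ n = 2
  · obtain ⟨rfl, rfl⟩ := hsmall
    have h4 := four_mul_abs_discr_le_sq_heightK hd (σ 0) α (fun i => hα i 0) hspan hne
    have hsqrt : √2 ≤ 2 := Real.sqrt_le_iff.mpr (by norm_num)
    calc 2 * |(discr K : ℝ)| * √(((2 : ℕ) : ℝ) - (1 : ℕ) + 1) * (2 - 1 - 1).factorial /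
          ((1 : ℕ).factorial * (2 : ℕ).factorial)
        = √2 * |(discr K : ℝ)| := by
          norm_num
          ring
      _ ≤ 4 * |(discr K : ℝ)| := by gcongr; linarith
      _ ≤ H ^ 2 := h4
  · have hΔ := abs_discr_le_sq_heightK σ hσ (by rw [Fintype.card_fin, hd]) α hspan
    have hfact := two_mul_factorial_mul_sqrt_mul_factorial_le
      (hd ▸ Module.finrank_pos : 0 < d) hn hsmall
    rw [Fintype.card_fin] at hΔ
    rw [div_le_iff₀ (by positivity)]
    calc 2 * |(discr K : ℝ)| * √((n : ℝ) - d + 1) * (n - d - 1).factorial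
        ≤ 2 * (d.factorial * H) ^ 2 * √((n : ℝ) - d + 1) * (n - d - 1).factorial := by gcongr
      _ = H ^ 2 * d.factorial *
            (2 * d.factorial * √((n : ℝ) - d + 1) * (n - d - 1).factorial) := by ring
      _ ≤ H ^ 2 * (d.factorial * n.factorial) := by
        rw [mul_assoc]
        gcongr
end
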